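/- Define f_2(s) = sum over k from 1 to s-1 of t_k t_{s-k} k^2, with t_k = (2k-2)!/(k!(k-1)!). Then for all integers s ≥ 2, 4 f_2(s) - f_2(s+1) + (2s-2)!/(s!(s-2)!) = 0. -/
import Mathlib


/-- `t k = (2k-2)! / (k! (k-1)!)` as a rational number. -/
def tcoef (k : ℕ) : ℚ :=
  (Nat.factorial (2 * k - 2) : ℚ) / ((Nat.factorial k : ℚ) * (Nat.factorial (k - 1) : ℚ))

/-- `f₂ s = ∑_{k=1}^{s-1} t_k t_{s-k} k²`. -/
def f2 (s : ℕ) : ℚ := ∑ k ∈ Finset.Icc 1 (s - 1), tcoef k * tcoef (s - k) * (k : ℚ) ^ 2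

/-- Zeilberger-style certificate polynomial. -/
def qq (s k : ℕ) : ℚ :=
  (k : ℚ) * ((1 - (s:ℚ) - 2*(s:ℚ)^2) + (8*(s:ℚ) - 1)*(k:ℚ)
    + (2*(s:ℚ)^2 - 5*(s:ℚ) - 4)*(k:ℚ)^2 + (4 - 2*(s:ℚ))*(k:ℚ)^3)

/-- Telescoping certificate. -/
def Gc (s k : ℕ) : ℚ :=
  2 * qq s k * tcoef k * tcoef (s - k) / ((s * (s - 1) * (s - k + 1) : ℕ) : ℚ)

lemma tcoef_pos (k : ℕ) : 0 < tcoef k := by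
  unfold tcoef
  positivity

lemma tcoef_one : tcoef 1 = 1 := by norm_num [tcoef]

lemma tcoef_two : tcoef 2 = 1 := by norm_num [tcoef, Nat.factorial]

lemma tcoef_succ (j : ℕ) :
    tcoef (j+2) = tcoef (j+1) * (4*((j:ℚ)+1) - 2) / ((j:ℚ)+2) := by
  have h1 : 2*(j+2) - 2 = (2*j+1)+1 := by omega
  have h2 : 2*(j+1) - 2 = 2*j := by omega
  have h3 : (j+2) - 1 = j+1 := by omega
  have h4 : (j+1) - 1 = j := by omega
  rw [tcoef, tcoef, h1, h2, h3, h4, Nat.factorial_succ, Nat.factorial_succ (2*j),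
    Nat.factorial_succ (j+1), Nat.factorial_succ j]
  have e1 : ((Nat.factorial (2*j) : ℚ)) ≠ 0 := by positivity
  have e2 : ((Nat.factorial j : ℚ)) ≠ 0 := by positivity
  push_cast
  field_simp
  ring

lemma Gc_one (s : ℕ) : Gc s 1 = 0 := by
  have : qq s 1 = 0 := by unfold qq; push_cast; ring
  simp [Gc, this]

lemma step (a b : ℕ) :
    4 * (tcoef (a+1) * tcoef (b+2) * ((a+1 : ℕ):ℚ)^2)
      - tcoef (a+1) * tcoef (b+3) * ((a+1 : ℕ):ℚ)^2
      = Gc (a+b+3) (a+2) - Gc (a+b+3) (a+1) := by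
  unfold Gc qq
  rw [show a+b+3 - (a+2) = b+1 from by omega, show a+b+3 - (a+1) = b+2 from by omega,
    show (a+b+3) - 1 = a+b+2 from by omega,
    show b+3 = (b+1)+2 from by omega, tcoef_succ (b+1), tcoef_succ b,
    show a+2 = a+1+1 from by omega, show a+1+1 = a+2 from by omega]
  rw [show a+2 = a+1+1 from rfl, tcoef_succ a]
  have e1 : ((a:ℚ)+2) ≠ 0 := by positivity
  have e2 : ((b:ℚ)+2) ≠ 0 := by positivity
  have e3 : ((b:ℚ)+3) ≠ 0 := by positivity
  have e4 : ((a:ℚ)+(b:ℚ)+3) ≠ 0 := by positivity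
  have e5 : ((a:ℚ)+(b:ℚ)+2) ≠ 0 := by positivity
  push_cast
  field_simp
  ring

lemma boundary (n : ℕ) :
    Gc (n+2) (n+1)
      + (4 * (tcoef (n+1) * tcoef 1 * ((n+1 : ℕ):ℚ)^2)
        - tcoef (n+1) * tcoef 2 * ((n+1 : ℕ):ℚ)^2)
      = tcoef (n+2) * ((n:ℚ)^2 + 3*(n:ℚ) + 3) := by
  unfold Gc qq
  rw [show n+2 - (n+1) = 1 from by omega, show (n+2) - 1 = n+1 from by omega,
    tcoef_one, tcoef_two, tcoef_succ n]
  have e1 : ((n:ℚ)+2) ≠ 0 := by positivity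
  have e2 : ((n:ℚ)+1) ≠ 0 := by positivity
  push_cast
  field_simp
  ring

lemma tele (g : ℕ → ℚ) (n : ℕ) :
    ∑ k ∈ Finset.Icc 1 n, (g (k+1) - g k) = g (n+1) - g 1 := by
  induction n with
  | zero => simp
  | succ n ih => rw [Finset.sum_Icc_succ_top (by omega), ih]; ring

theorem stmt8 (s : ℕ) (hs : 2 ≤ s) :
    4 * f2 s - f2 (s + 1)
      + (Nat.factorial (2 * s - 2) : ℚ) /
          ((Nat.factorial s : ℚ) * (Nat.factorial (s - 2) : ℚ)) = 0 := by
  obtain ⟨n, rfl⟩ : ∃ n, s = n + 2 := ⟨s - 2, by omega⟩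
  have key : ∀ k ∈ Finset.Icc 1 n,
      4 * (tcoef k * tcoef (n+2-k) * (k:ℚ)^2) - tcoef k * tcoef (n+3-k) * (k:ℚ)^2
        = Gc (n+2) (k+1) - Gc (n+2) k := by
    intro k hk
    simp only [Finset.mem_Icc] at hk
    obtain ⟨a, rfl⟩ : ∃ a, k = a+1 := ⟨k - 1, by omega⟩
    obtain ⟨b, rfl⟩ : ∃ b, n = a + b + 1 := ⟨n - a - 1, by omega⟩
    rw [show a+b+1+2-(a+1) = b+2 from by omega, show a+b+1+3-(a+1) = b+3 from by omega,
      show a+b+1+2 = a+b+3 from by omega, show a+1+1 = a+2 from rfl]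
    exact step a b
  have hsum : ∑ k ∈ Finset.Icc 1 n,
      (4 * (tcoef k * tcoef (n+2-k) * (k:ℚ)^2) - tcoef k * tcoef (n+3-k) * (k:ℚ)^2)
      = Gc (n+2) (n+1) := by
    rw [Finset.sum_congr rfl key, tele (Gc (n+2)) n, Gc_one, sub_zero]
  have hAB : ∑ k ∈ Finset.Icc 1 (n+1),
      (4 * (tcoef k * tcoef (n+2-k) * (k:ℚ)^2) - tcoef k * tcoef (n+3-k) * (k:ℚ)^2)
      = tcoef (n+2) * ((n:ℚ)^2 + 3*(n:ℚ) + 3) := by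
    rw [Finset.sum_Icc_succ_top (show 1 ≤ n+1 by omega), hsum,
      show n+2-(n+1) = 1 from by omega, show n+3-(n+1) = 2 from by omega]
    exact boundary n
  have hf3 : f2 (n+3) = (∑ k ∈ Finset.Icc 1 (n+1), tcoef k * tcoef (n+3-k) * (k:ℚ)^2)
      + tcoef (n+2) * tcoef 1 * ((n+2 : ℕ):ℚ)^2 := by
    rw [f2, show n+3-1 = n+2 from rfl, Finset.sum_Icc_succ_top (show 1 ≤ n+2 by omega),
      show n+3-(n+2) = 1 from by omega]
  have hf2 : f2 (n+2) = (∑ k ∈ Finset.Icc 1 (n+1), tcoef k * tcoef (n+2-k) * (k:ℚ)^2) := by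
    rw [f2, show n+2-1 = n+1 from rfl]
  rw [show n+2+1 = n+3 from rfl, hf3, hf2, Finset.mul_sum, tcoef_one]
  have hcomb : ∑ k ∈ Finset.Icc 1 (n+1), 4 * (tcoef k * tcoef (n+2-k) * (k:ℚ)^2)
      - ∑ k ∈ Finset.Icc 1 (n+1), tcoef k * tcoef (n+3-k) * (k:ℚ)^2
      = tcoef (n+2) * ((n:ℚ)^2 + 3*(n:ℚ) + 3) := by
    rw [← Finset.sum_sub_distrib, hAB]
  rw [sub_add_eq_sub_sub, hcomb]
  rw [show 2*(n+2)-2 = (2*n+1)+1 from by omega, show (n+2)-2 = n from by omega]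
  rw [tcoef, show 2*(n+2)-2 = (2*n+1)+1 from by omega, show (n+2)-1 = n+1 from by omega]
  rw [Nat.factorial_succ (2*n+1), Nat.factorial_succ (2*n), Nat.factorial_succ (n+1),
    Nat.factorial_succ n]
  have e1 : ((Nat.factorial (2*n) : ℚ)) ≠ 0 := by positivity
  have e2 : ((Nat.factorial n : ℚ)) ≠ 0 := by positivity
  have e3 : ((n:ℚ)+1) ≠ 0 := by positivity
  have e4 : ((n:ℚ)+2) ≠ 0 := by positivity
  push_cast
  field_simp
  ring
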